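/- arXiv:1908.00161 — 7 statements merged into one kernel-verified Lean document; each statement's English description precedes it below -/
import Mathlib

section
/- For two agents picking items alternately (sequence 1,2,1,2,...) from a set of items, where each agent in turn picks a remaining item maximizing their own additive utility, and all utilities are positive, the resulting allocation is envy-free up to one item (EF1): for each agent i and the other agent j, there is an item o in j's bundle such that u_i(bundle of i) ≥ u_i(bundle of j minus {o}). -/
/-!
Whenever the first picker `a` takes an item, the item `b` takes right afterwards was still
available, so `a` values it no more than its own pick; pairing off the picks shows that `a`
does not envy `b` at all. After `a`'s first pick the remaining turns form a round robin in which
`b` picks first, so `b` does not envy `a`'s bundle minus that first item.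
-/

open Finset

def seqValid {A O : Type*} [DecidableEq O] (u : A → O → ℝ) :
    List A → List O → Finset O → Prop
  | [], [], _ => True
  | a :: s, o :: ps, rem =>
      o ∈ rem ∧ (∀ o' ∈ rem, u a o' ≤ u a o) ∧ seqValid u s ps (rem.erase o)
  | _, _, _ => False

def bundleOf {A O : Type*} [DecidableEq A] [DecidableEq O]
    (seq : List A) (picks : List O) (i : A) : Finset O :=
  ((seq.zip picks).filterMap (fun x => if x.1 = i then some x.2 else none)).toFinset

inductive Alternating {A : Type*} : A → A → List A → Prop
  | nil {a b : A} : Alternating a b []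
  | cons {a b : A} {s : List A} : Alternating b a s → Alternating a b (a :: s)

theorem alternating_ofFn {A : Type*} (a b : A) (n : ℕ) :
    Alternating a b (List.ofFn fun t : Fin n => if Even (t : ℕ) then a else b) := by
  induction n generalizing a b with
  | zero => exact .nil
  | succ n ih =>
    simp only [List.ofFn_succ, Fin.val_zero, Even.zero, if_true, Fin.val_succ, Nat.even_add_one,
      ite_not]
    exact (ih b a).cons

def EF1 {O : Type*} [DecidableEq O] (v : O → ℝ) (mine theirs : Finset O) : Prop :=
  ∃ O' ⊆ theirs, O'.card ≤ 1 ∧ ∑ o ∈ theirs \ O', v o ≤ ∑ o ∈ mine, v o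

theorem ef1_self {O : Type*} [DecidableEq O] (v : O → ℝ) (B : Finset O) : EF1 v B B :=
  ⟨∅, by simp⟩

section RoundRobin

variable {A O : Type*} [DecidableEq O] {u : A → O → ℝ}

theorem seqValid.toFinset_subset :
    ∀ {s : List A} {ps : List O} {rem : Finset O}, seqValid u s ps rem → ps.toFinset ⊆ rem
  | [], [], _, _ => by simp
  | _ :: _, o :: _, _, ⟨ho, _, hv⟩ => by
    simpa [Finset.insert_subset_iff, ho] using hv.toFinset_subset.trans (Finset.erase_subset _ _)

variable [DecidableEq A]

@[simp] theorem bundleOf_cons_self (s : List A) (ps : List O) (i : A) (o : O) :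
    bundleOf (i :: s) (o :: ps) i = insert o (bundleOf s ps i) := by
  simp [bundleOf]

theorem bundleOf_cons_of_ne {c i : A} (h : c ≠ i) (s : List A) (ps : List O) (o : O) :
    bundleOf (c :: s) (o :: ps) i = bundleOf s ps i := by
  simp [bundleOf, h]

theorem bundleOf_subset_toFinset (s : List A) (ps : List O) (i : A) :
    bundleOf s ps i ⊆ ps.toFinset := by
  intro o ho
  simp only [bundleOf, List.mem_toFinset, List.mem_filterMap] at ho ⊢
  obtain ⟨x, hx, hxo⟩ := ho
  split_ifs at hxo
  cases hxo
  exact (List.of_mem_zip hx).2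

theorem seqValid.bundleOf_subset {s : List A} {ps : List O} {rem : Finset O}
    (hv : seqValid u s ps rem) (i : A) : bundleOf s ps i ⊆ rem :=
  (bundleOf_subset_toFinset s ps i).trans hv.toFinset_subset

/- The second conjunct bounds the envy of the second picker `b` by the value of its favourite
remaining item `x`; it is the induction hypothesis needed for the first conjunct once the roles
of `a` and `b` swap. -/
theorem Alternating.envy_bounds (hu : ∀ i o, 0 ≤ u i o) {a b : A} (hab : a ≠ b) {s : List A}
    (hs : Alternating a b s) {ps : List O} {rem : Finset O} (hv : seqValid u s ps rem) :
    ∑ o ∈ bundleOf s ps b, u a o ≤ ∑ o ∈ bundleOf s ps a, u a o ∧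
      ∀ x, (∀ o ∈ rem, u b o ≤ u b x) →
        ∑ o ∈ bundleOf s ps a, u b o ≤ ∑ o ∈ bundleOf s ps b, u b o + u b x := by
  induction hs generalizing ps rem with
  | @nil a b =>
    cases ps with
    | nil => simpa [bundleOf] using fun x _ => hu b x
    | cons => exact hv.elim
  | @cons a b s hs ih =>
    obtain _ | ⟨y, ps⟩ := ps
    · exact hv.elim
    obtain ⟨hy, hy_max, hv⟩ := hv
    have hy_fresh : y ∉ bundleOf s ps a := fun h => by simpa using hv.bundleOf_subset a h
    obtain ⟨ih_b, ih_a⟩ := ih hab.symm hv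
    rw [bundleOf_cons_self, bundleOf_cons_of_ne hab, Finset.sum_insert hy_fresh,
      Finset.sum_insert hy_fresh]
    refine ⟨?_, fun x hx => ?_⟩
    · have := ih_a y fun o ho => hy_max o (Finset.mem_of_mem_erase ho)
      linarith
    · linarith [hx y hy]

theorem Alternating.ef1_of_seqValid (hu : ∀ i o, 0 ≤ u i o) {a b : A} (hab : a ≠ b)
    {s : List A} (hs : Alternating a b s) {ps : List O} {rem : Finset O}
    (hv : seqValid u s ps rem) :
    EF1 (u a) (bundleOf s ps a) (bundleOf s ps b) ∧
      EF1 (u b) (bundleOf s ps b) (bundleOf s ps a) := by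
  refine ⟨⟨∅, by simpa using (hs.envy_bounds hu hab hv).1⟩, ?_⟩
  cases hs with
  | nil => exact ⟨∅, by simp [bundleOf]⟩
  | @cons _ _ s hs =>
    obtain _ | ⟨y, ps⟩ := ps
    · exact hv.elim
    obtain ⟨-, -, hv⟩ := hv
    have hy_fresh : y ∉ bundleOf s ps a := fun h => by simpa using hv.bundleOf_subset a h
    refine ⟨{y}, by simp, by simp, ?_⟩
    rw [bundleOf_cons_self, bundleOf_cons_of_ne hab, Finset.sdiff_singleton_eq_erase,
      Finset.erase_insert hy_fresh]
    exact (hs.envy_bounds hu hab.symm hv).1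

end RoundRobin

/-- Round robin allocation for two agents (turn sequence 1,2,1,2,...) with positive
additive utilities is EF1. -/
theorem stmt0 {O : Type*} [Fintype O] [DecidableEq O]
    (u : Fin 2 → O → ℝ) (hpos : ∀ i o, 0 < u i o)
    (seq : List (Fin 2))
    (hseq : seq = List.ofFn
      (fun t : Fin (Fintype.card O) => (⟨t.val % 2, Nat.mod_lt _ (by norm_num)⟩ : Fin 2)))
    (picks : List O) (hvalid : seqValid u seq picks Finset.univ) :
    ∀ i j : Fin 2, ∃ O' ⊆ bundleOf seq picks j, O'.card ≤ 1 ∧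
      ∑ o ∈ bundleOf seq picks j \ O', u i o ≤ ∑ o ∈ bundleOf seq picks i, u i o := by
  have halt : Alternating 0 1 seq := by
    convert alternating_ofFn (0 : Fin 2) 1 (Fintype.card O)
    rw [hseq]
    congr 1
    funext t
    ext
    split_ifs with h <;> simp_all [Nat.even_iff]
  obtain ⟨h01, h10⟩ := halt.ef1_of_seqValid (fun i o => (hpos i o).le) (by decide) hvalid
  intro i j
  fin_cases i <;> fin_cases j
  · exact ef1_self _ _
  · exact h01
  · exact h10
  · exact ef1_self _ _
end

section
/- If a sequence of agent-turns is recursively balanced (at every prefix, the number of turns of any two agents differs by at most 1), and all agents have strictly positive additive utilities, then the sequential allocation in which each agent on their turn picks a most-preferred remaining item produces an allocation p such that for all agents i, j there exists an item o with u_i(p(i)) ≥ u_i(p(j) \ {o}); that is, the allocation is EF1. -/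
open Finset

/-- A sequence of turns is recursively balanced if at every prefix the numbers of turns of
any two agents differ by at most one. -/
def RecBalanced {A : Type*} [DecidableEq A] (seq : List A) : Prop :=
  ∀ k : ℕ, ∀ i j : A, (seq.take k).count i ≤ (seq.take k).count j + 1

/-!
Fix agents `i ≠ j`. Recursive balance says that in every prefix `j` has picked at most once
more than `i`, so `i` makes its `m`-th pick before `j` makes its `(m+1)`-st. At that moment
`j`'s `(m+1)`-st item is still available, hence worth at most `i`'s `m`-th pick in `i`'s eyes.
Pairing `i`'s picks with `j`'s picks from the second on bounds the value, for `i`, of `j`'s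
bundle without its first item by the value of `i`'s own bundle.
The induction along the sequence keeps track of the lead `c` of `j` over `i`.
-/

lemma List.toFinset_sdiff_toFinset_take {α : Type*} [DecidableEq α] {l : List α} (hl : l.Nodup)
    (k : ℕ) : l.toFinset \ (l.take k).toFinset = (l.drop k).toFinset := by
  calc l.toFinset \ (l.take k).toFinset
      = ((l.take k).toFinset ∪ (l.drop k).toFinset) \ (l.take k).toFinset := by
        rw [← List.toFinset_append, List.take_append_drop]
    _ = (l.drop k).toFinset := by
        rw [union_sdiff_left, sdiff_eq_self_of_disjoint]
        exact List.disjoint_toFinset_iff_disjoint.mpr (List.disjoint_take_drop hl le_rfl).symm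

lemma List.sum_map_drop_le_add_sum_map_drop_succ {α : Type*} {f : α → ℝ} {b : ℝ} (hb : 0 ≤ b)
    {l : List α} (hl : ∀ x ∈ l, f x ≤ b) (c : ℕ) :
    ((l.drop c).map f).sum ≤ b + ((l.drop (c + 1)).map f).sum := by
  rw [← List.tail_drop]
  cases hd : l.drop c with
  | nil => simpa using hb
  | cons x t =>
    have hx : f x ≤ b := hl x (List.mem_of_mem_drop (hd ▸ List.mem_cons_self))
    simpa using hx

lemma List.count_take_succ_cons {α : Type*} [DecidableEq α] (a : α) (s : List α) (k : ℕ)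
    (x : α) :
    ((a :: s).take (k + 1)).count x = (s.take k).count x + if a = x then 1 else 0 := by
  simp [List.count_cons]

section

variable {A O : Type*} [DecidableEq O]

lemma seqValid.mem {u : A → O → ℝ} : ∀ {seq : List A} {picks : List O} {rem : Finset O},
    seqValid u seq picks rem → ∀ o ∈ picks, o ∈ rem
  | [], [], _, _ => by simp
  | _ :: _, o :: _, rem, ⟨ho, _, htail⟩ => by
      rintro x (_ | ⟨_, hx⟩)
      · exact ho
      · exact mem_of_mem_erase (htail.mem x hx)

lemma seqValid.nodup {u : A → O → ℝ} : ∀ {seq : List A} {picks : List O} {rem : Finset O},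
    seqValid u seq picks rem → picks.Nodup
  | [], [], _, _ => List.nodup_nil
  | _ :: _, o :: _, rem, ⟨_, _, htail⟩ =>
      List.nodup_cons.mpr ⟨fun ho => notMem_erase o rem (htail.mem o ho), htail.nodup⟩

end

section

variable {A O : Type*} [DecidableEq A]

def pickList (seq : List A) (picks : List O) (i : A) : List O :=
  (seq.zip picks).filterMap (fun x => if x.1 = i then some x.2 else none)

lemma pickList_cons (a : A) (s : List A) (o : O) (ps : List O) (i : A) :
    pickList (a :: s) (o :: ps) i = if a = i then o :: pickList s ps i else pickList s ps i := by
  simp only [pickList, List.zip_cons_cons, List.filterMap_cons]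
  split_ifs <;> rfl

lemma pickList_sublist : ∀ (seq : List A) (picks : List O) (i : A),
    (pickList seq picks i).Sublist picks
  | [], ps, i => by simp [pickList]
  | a :: s, [], i => by simp [pickList]
  | a :: s, o :: ps, i => by
      rw [pickList_cons]
      split_ifs
      · exact (pickList_sublist s ps i).cons_cons o
      · exact (pickList_sublist s ps i).cons o

variable [DecidableEq O]

lemma bundleOf_eq_toFinset (seq : List A) (picks : List O) (i : A) :
    bundleOf seq picks i = (pickList seq picks i).toFinset := rfl

lemma sum_map_drop_pickList_le {u : A → O → ℝ} {i j : A} (hij : i ≠ j)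
    (hnonneg : ∀ o, 0 ≤ u i o) : ∀ {seq : List A} {picks : List O} {rem : Finset O} {c : ℕ},
    seqValid u seq picks rem →
    (∀ k, (seq.take k).count j ≤ (seq.take k).count i + c) →
    (((pickList seq picks j).drop c).map (u i)).sum ≤ ((pickList seq picks i).map (u i)).sum
  | [], [], _, _, _, _ => by simp [pickList]
  | a :: s, o :: ps, rem, c, ⟨_, hmax, htail⟩, hlead => by
      have hlead' : ∀ k, (s.take k).count j + (if a = j then 1 else 0) ≤
          (s.take k).count i + (if a = i then 1 else 0) + c := fun k => by
        simpa only [List.count_take_succ_cons, add_right_comm] using hlead (k + 1)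
      simp only [pickList_cons]
      by_cases hai : a = i
      · subst hai
        have hrest : ∀ x ∈ pickList s ps j, u a x ≤ u a o := fun x hx =>
          hmax x (mem_of_mem_erase (htail.mem x ((pickList_sublist s ps j).subset hx)))
        have ih := sum_map_drop_pickList_le hij hnonneg htail (c := c + 1)
          fun k => by simpa [hij, add_assoc, add_comm 1] using hlead' k
        simp only [↓reduceIte, if_neg hij, List.map_cons, List.sum_cons]
        -- `j`'s later picks are all still available now, so `i` values each at most `o`.
        linarith [List.sum_map_drop_le_add_sum_map_drop_succ (hnonneg o) hrest c]
      · by_cases haj : a = j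
        · subst haj
          obtain ⟨c, rfl⟩ : ∃ c', c = c' + 1 :=
            ⟨c - 1, by have := hlead 1; simp [hai] at this; omega⟩
          simpa [hai] using sum_map_drop_pickList_le hij hnonneg htail (c := c)
            fun k => by simpa [hai, add_comm 1, ← add_assoc] using hlead' k
        · simpa [hai, haj] using sum_map_drop_pickList_le hij hnonneg htail (c := c)
            fun k => by simpa [hai, haj] using hlead' k

end

/-- Sequential allocation along any recursively balanced picking sequence, with strictly
positive additive utilities, yields an EF1 allocation. -/
theorem stmt1 {n : ℕ} {O : Type*} [Fintype O] [DecidableEq O]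
    (u : Fin n → O → ℝ) (hpos : ∀ i o, 0 < u i o)
    (seq : List (Fin n)) (hRB : RecBalanced seq)
    (picks : List O) (hvalid : seqValid u seq picks Finset.univ) :
    ∀ i j : Fin n, ∃ O' ⊆ bundleOf seq picks j, O'.card ≤ 1 ∧
      ∑ o ∈ bundleOf seq picks j \ O', u i o ≤ ∑ o ∈ bundleOf seq picks i, u i o := by
  intro i j
  rcases eq_or_ne i j with rfl | hij
  · exact ⟨∅, empty_subset _, by simp, by simp⟩
  have hnodup (k : Fin n) : (pickList seq picks k).Nodup :=
    (pickList_sublist seq picks k).nodup hvalid.nodup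
  refine ⟨((pickList seq picks j).take 1).toFinset, ?_, ?_, ?_⟩
  · exact fun _ hx => List.mem_toFinset.mpr (List.mem_of_mem_take (List.mem_toFinset.mp hx))
  · exact (List.toFinset_card_le _).trans (by simp)
  · rw [bundleOf_eq_toFinset, bundleOf_eq_toFinset, List.toFinset_sdiff_toFinset_take (hnodup j),
      List.sum_toFinset _ ((hnodup j).sublist (List.drop_sublist 1 _)),
      List.sum_toFinset _ (hnodup i)]
    exact sum_map_drop_pickList_le hij (fun o => (hpos i o).le) hvalid fun k => hRB k j i
end

section
/- If all agents have strictly negative utilities for all items (items are chores) and the picking sequence is round-robin (agents take turns in a fixed cyclic order π_1,...,π_n repeatedly), then the sequential allocation, where each agent on their turn picks a least-bad remaining item, is EF1: for all agents i, j there exists an item o ∈ p(i) such that u_i(p(i) \ {o}) ≥ u_i(p(j)). -/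
open Finset

/-! Number the turns `0, 1, 2, …`; agent `a` picks at the turns `k ≡ π⁻¹ a [MOD n]`.
Given agents `i` and `j`, choose `t < n` with `π⁻¹ i + t ≡ π⁻¹ j [MOD n]`. Every turn `k ≥ t` of `j`
is matched with the earlier turn `k - t` of `i`, at which `i` picked greedily while `j`'s later item
was still available, so `i` values its own item at least as much. The turns of `j` before `t` only
add chores to `j`'s bundle, and at most one turn of `i` (its last) is left unmatched, since two
turns of `i` are at least `n ≥ t` apart. -/

namespace seqValid

variable {A O : Type*} [DecidableEq O] {u : A → O → ℝ}

theorem length_eq : ∀ {s : List A} {ps : List O} {rem : Finset O},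
    seqValid u s ps rem → ps.length = s.length
  | [], [], _, _ => rfl
  | _ :: _, _ :: _, _, h => congrArg (· + 1) (length_eq h.2.2)

theorem mem_s3 : ∀ {s : List A} {ps : List O} {rem : Finset O},
    seqValid u s ps rem → ∀ o ∈ ps, o ∈ rem
  | [], [], _, _ => by simp
  | _ :: _, _ :: _, _, h => by
    simp only [List.mem_cons, forall_eq_or_imp]
    exact ⟨h.1, fun o ho => mem_of_mem_erase (mem_s3 h.2.2 o ho)⟩

theorem nodup_s3 : ∀ {s : List A} {ps : List O} {rem : Finset O},
    seqValid u s ps rem → ps.Nodup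
  | [], [], _, _ => List.nodup_nil
  | _ :: _, o :: _, rem, h =>
    List.nodup_cons.mpr ⟨fun ho => notMem_erase o rem (mem_s3 h.2.2 o ho), nodup_s3 h.2.2⟩

theorem le_getD (o₀ : O) : ∀ {s : List A} {ps : List O} {rem : Finset O},
    seqValid u s ps rem → ∀ {a : A} {k k' : ℕ}, s[k]? = some a → k ≤ k' → k' < ps.length →
      u a (ps.getD k' o₀) ≤ u a (ps.getD k o₀)
  | [], [], _, _, _, _, _, _, _, hk' => absurd hk' (Nat.not_lt_zero _)
  | b :: _, _ :: ps, _, h, a, 0, k', ha, _, hk' => by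
    obtain rfl : b = a := by simpa using ha
    cases k' with
    | zero => exact le_rfl
    | succ k' =>
      have hk' : k' < ps.length := by simpa using hk'
      simp only [List.getD_cons_succ, List.getD_cons_zero, ps.getD_eq_getElem o₀ hk']
      exact h.2.1 _ (mem_of_mem_erase (mem_s3 h.2.2 _ (List.getElem_mem hk')))
  | _ :: _, _ :: _, _, _, _, _ + 1, 0, _, hkk, _ => absurd hkk (Nat.not_succ_le_zero _)
  | _ :: _, _ :: _, _, h, _, _ + 1, _ + 1, ha, hkk, hk' =>
    le_getD o₀ h.2.2 ha (by omega) (by simpa using hk')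

end seqValid

theorem List.Nodup.injOn_getD {α : Type*} {l : List α} (h : l.Nodup) (d : α) :
    Set.InjOn (l.getD · d) (Finset.range l.length) := by
  intro k hk k' hk' hkk'
  simp only [coe_range, Set.mem_Iio] at hk hk'
  dsimp only at hkk'
  rw [l.getD_eq_getElem d hk, l.getD_eq_getElem d hk'] at hkk'
  exact h.getElem_inj_iff.mp hkk'

theorem bundleOf_eq_image {A O : Type*} [DecidableEq A] [DecidableEq O] {seq : List A}
    {picks : List O} (h : picks.length = seq.length) (o₀ : O) (a : A) :
    bundleOf seq picks a =
      ((range seq.length).filter (seq[·]? = some a)).image (picks.getD · o₀) := by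
  ext o
  simp only [bundleOf, List.mem_toFinset, List.mem_filterMap, Option.ite_none_right_eq_some,
    Option.some.injEq, mem_image, mem_filter, mem_range]
  simp only [List.mem_iff_getElem, List.getElem_zip, List.length_zip, List.getElem?_eq_some_iff]
  constructor
  · rintro ⟨_, ⟨k, hk, rfl⟩, rfl, rfl⟩
    exact ⟨k, ⟨by omega, by omega, rfl⟩, List.getD_eq_getElem _ _ _⟩
  · rintro ⟨k, ⟨hk, -, rfl⟩, rfl⟩
    exact ⟨_, ⟨k, by omega, rfl⟩, rfl, (List.getD_eq_getElem _ _ _).symm⟩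

def rangeModEq (L n d : ℕ) : Finset ℕ := (range L).filter (· ≡ d [MOD n])

theorem filter_getElem?_eq_some_eq_rangeModEq {n : ℕ} (hn : 0 < n) {A : Type*} [DecidableEq A]
    (π : Fin n ≃ A) {seq : List A}
    (hRR : ∀ k (hk : k < seq.length), seq.get ⟨k, hk⟩ = π ⟨k % n, Nat.mod_lt _ hn⟩) (a : A) :
    (range seq.length).filter (seq[·]? = some a) = rangeModEq seq.length n (π.symm a) := by
  ext k
  simp only [rangeModEq, mem_filter, mem_range, List.getElem?_eq_some_iff, and_congr_right_iff]
  intro hk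
  rw [exists_prop_of_true hk, show seq[k] = seq.get ⟨k, hk⟩ from rfl, hRR, ← Equiv.eq_symm_apply,
    Fin.ext_iff, Nat.ModEq, Nat.mod_eq_of_lt (π.symm a).isLt]

theorem card_filter_rangeModEq_le_one {L n t : ℕ} (htn : t ≤ n) (d : ℕ) :
    ((rangeModEq L n d).filter (L ≤ · + t)).card ≤ 1 := by
  refine card_le_one.mpr fun a ha b hb => ?_
  simp only [rangeModEq, mem_filter, mem_range] at ha hb
  have hab : a ≡ b [MOD n] := ha.1.2.trans hb.1.2.symm
  rcases le_total a b with h | h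
  · have := Nat.eq_zero_of_dvd_of_lt ((Nat.modEq_iff_dvd' h).mp hab) (by omega)
    omega
  · have := Nat.eq_zero_of_dvd_of_lt ((Nat.modEq_iff_dvd' h).mp hab.symm) (by omega)
    omega

theorem Nat.exists_lt_add_modEq {n : ℕ} (hn : 0 < n) (d d' : ℕ) : ∃ t < n, d + t ≡ d' [MOD n] := by
  have := NeZero.of_pos hn
  refine ⟨(d' - d : ZMod n).val, ZMod.val_lt _, ?_⟩
  rw [← ZMod.natCast_eq_natCast_iff, Nat.cast_add, ZMod.natCast_zmod_val, add_sub_cancel]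

theorem exists_sum_rangeModEq_le_sum_sdiff {M : Type*} [AddCommMonoid M] [PartialOrder M]
    [IsOrderedAddMonoid M] {v : ℕ → M} {L n t d d' : ℕ} (htn : t ≤ n)
    (hdd' : d + t ≡ d' [MOD n]) (hv_nonpos : ∀ k < t, v k ≤ 0)
    (hv_shift : ∀ m ∈ rangeModEq L n d, m + t < L → v (m + t) ≤ v m) :
    ∃ D ⊆ rangeModEq L n d, D.card ≤ 1 ∧
      ∑ k ∈ rangeModEq L n d', v k ≤ ∑ k ∈ rangeModEq L n d \ D, v k := by
  refine ⟨_, filter_subset _ _, card_filter_rangeModEq_le_one htn d, ?_⟩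
  have hshift : ∑ k ∈ (rangeModEq L n d').filter (t ≤ ·), v k =
      ∑ m ∈ rangeModEq L n d \ (rangeModEq L n d).filter (L ≤ · + t), v (m + t) := by
    refine sum_nbij' (· - t) (· + t) ?_ ?_ ?_ ?_ ?_ <;>
      simp only [rangeModEq, mem_sdiff, mem_filter, mem_range, not_and, not_le]
    · rintro k ⟨⟨hkL, hk⟩, htk⟩
      refine ⟨⟨by omega, Nat.ModEq.add_right_cancel' t ?_⟩, fun _ => by omega⟩
      rw [Nat.sub_add_cancel htk]
      exact hk.trans hdd'.symm
    · rintro m ⟨hm, hmL⟩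
      exact ⟨⟨hmL hm, (hm.2.add_right t).trans hdd'⟩, Nat.le_add_left t m⟩
    · intro k hk
      omega
    · intro m _
      omega
    · rintro k ⟨-, htk⟩
      rw [Nat.sub_add_cancel htk]
  calc ∑ k ∈ rangeModEq L n d', v k
      = ∑ k ∈ (rangeModEq L n d').filter (t ≤ ·), v k
        + ∑ k ∈ (rangeModEq L n d').filter (¬ t ≤ ·), v k :=
        (sum_filter_add_sum_filter_not _ _ _).symm
    _ ≤ ∑ k ∈ (rangeModEq L n d').filter (t ≤ ·), v k + 0 :=
        add_le_add_right (sum_nonpos fun k hk => hv_nonpos k (not_le.mp (mem_filter.mp hk).2)) _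
    _ ≤ ∑ m ∈ rangeModEq L n d \ (rangeModEq L n d).filter (L ≤ · + t), v m := by
        rw [add_zero, hshift]
        refine sum_le_sum fun m hm => ?_
        simp only [mem_sdiff, mem_filter, not_and, not_le] at hm
        exact hv_shift m hm.1 (hm.2 hm.1)

theorem stmt3_general {n : ℕ} (hn : 0 < n) {O : Type*} [Fintype O] [DecidableEq O]
    (u : Fin n → O → ℝ) (hneg : ∀ i o, u i o < 0)
    (π : Equiv.Perm (Fin n))
    (seq : List (Fin n))
    (hRR : ∀ k (hk : k < seq.length), seq.get ⟨k, hk⟩ = π ⟨k % n, Nat.mod_lt _ hn⟩)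
    (picks : List O) (hvalid : seqValid u seq picks Finset.univ) :
    ∀ i j : Fin n, ∃ O' ⊆ bundleOf seq picks i, O'.card ≤ 1 ∧
      ∑ o ∈ bundleOf seq picks j, u i o ≤ ∑ o ∈ bundleOf seq picks i \ O', u i o := by
  intro i j
  rcases isEmpty_or_nonempty O with _ | ⟨⟨o₀⟩⟩
  · exact ⟨∅, empty_subset _, by simp, by simp only [eq_empty_of_isEmpty, sum_empty, le_refl]⟩
  set p : ℕ → O := (picks.getD · o₀)
  have hlen := hvalid.length_eq
  have hslots : ∀ a, (range seq.length).filter (seq[·]? = some a) =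
      rangeModEq seq.length n (π.symm a) := filter_getElem?_eq_some_eq_rangeModEq hn π hRR
  have hbundle : ∀ a, bundleOf seq picks a = (rangeModEq seq.length n (π.symm a)).image p :=
    fun a => by rw [bundleOf_eq_image hlen o₀, hslots]
  obtain ⟨t, htn, hdt⟩ := Nat.exists_lt_add_modEq hn (π.symm i) (π.symm j)
  obtain ⟨D, hD, hcard, hsum⟩ := exists_sum_rangeModEq_le_sum_sdiff (v := fun k => u i (p k))
    htn.le hdt (fun k _ => (hneg i _).le) fun m hm hmL => by
      rw [← hslots, mem_filter] at hm
      exact hvalid.le_getD o₀ hm.2 (Nat.le_add_right m t) (hlen ▸ hmL)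
  have hinj : ∀ d, Set.InjOn p (rangeModEq seq.length n d) := fun d =>
    (hvalid.nodup_s3.injOn_getD o₀).mono (hlen ▸ filter_subset _ _)
  refine ⟨D.image p, hbundle i ▸ image_subset_image hD, card_image_le.trans hcard, ?_⟩
  rw [hbundle, hbundle, ← image_sdiff_of_injOn (hinj _) hD, sum_image (hinj _),
    sum_image ((hinj _).mono sdiff_subset)]
  exact hsum

/-- For chores (all utilities strictly negative), sequential allocation along a round-robin
sequence (a fixed cyclic order of the agents, repeated until all items are allocated) is EF1:
agent `i`'s envy towards `j` is eliminated by removing one item from `i`'s own bundle. -/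
theorem stmt3 {n : ℕ} (hn : 0 < n) {O : Type*} [Fintype O] [DecidableEq O]
    (u : Fin n → O → ℝ) (hneg : ∀ i o, u i o < 0)
    (π : Equiv.Perm (Fin n))
    (seq : List (Fin n)) (hlen : seq.length = Fintype.card O)
    (hRR : ∀ k (hk : k < seq.length), seq.get ⟨k, hk⟩ = π ⟨k % n, Nat.mod_lt _ hn⟩)
    (picks : List O) (hvalid : seqValid u seq picks Finset.univ) :
    ∀ i j : Fin n, ∃ O' ⊆ bundleOf seq picks i, O'.card ≤ 1 ∧
      ∑ o ∈ bundleOf seq picks j, u i o ≤ ∑ o ∈ bundleOf seq picks i \ O', u i o :=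
  stmt3_general hn u hneg π seq hRR picks hvalid
end

section
/- There exists an instance with 3 agents and 9 singly-copied items, with utilities given by Borda-like scores (agents 1 and 2 value item o_k at 10−k for k=1..9; agent 3 values o_1 at 6, o_2 at 9, o_3 at 8, o_4 at 7, and o_k at 10−k for k=5..9), such that no allocation of all items maximizing the sum of utilities is EF1. -/
open Finset

/-- Utilities of the 3 agents over 9 items: agents 1,2 value item `o_k` at `10-k`;
agent 3 values the items at `6,9,8,7,5,4,3,2,1`. -/
noncomputable def u4 : Fin 3 → Fin 9 → ℝ :=
  ![fun k => 9 - (k.val : ℝ), fun k => 9 - (k.val : ℝ), ![6, 9, 8, 7, 5, 4, 3, 2, 1]]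

/-- The bundle of agent `i` under allocation `p` (each item to exactly one agent). -/
def bundle4 (p : Fin 9 → Fin 3) (i : Fin 3) : Finset (Fin 9) :=
  Finset.univ.filter (fun o => p o = i)

/-- Utilitarian welfare of an allocation. -/
noncomputable def welf4 (p : Fin 9 → Fin 3) : ℝ := ∑ o, u4 (p o) o

/-- EF1: for all agents `i, j`, removing at most one item from `j`'s bundle eliminates
`i`'s envy towards `j`. -/
def EF1_4 (p : Fin 9 → Fin 3) : Prop :=
  ∀ i j : Fin 3, ∃ O' ⊆ bundle4 p j, O'.card ≤ 1 ∧
    ∑ o ∈ bundle4 p j \ O', u4 i o ≤ ∑ o ∈ bundle4 p i, u4 i o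

/-
Every item can simultaneously go to an agent who values it most, so a utilitarian-maximal
allocation must do exactly that; in particular agent 3 receives `o₂, o₃, o₄` (agent `2` and
items `{1, 2, 3}` in the 0-based indexing below), which agents 1 and 2 value at `8 + 7 + 6 = 21`. Agents 1 and 2 have the same utilities, with total `45`, so one
of them gets a bundle worth at most `(45 - 21) / 2 = 12` to herself, while agent 3's bundle minus
any single item is still worth at least `21 - 8 = 13` to her.
-/

lemma sum_sub_le_sum_sdiff_of_card_le_one {ι : Type*} [DecidableEq ι] {s t : Finset ι}
    {f : ι → ℝ} {c : ℝ} (hc : 0 ≤ c) (hf : ∀ i ∈ s, f i ≤ c) (ht : #t ≤ 1) :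
    ∑ i ∈ s, f i - c ≤ ∑ i ∈ s \ t, f i := by
  have hinter : ∑ i ∈ s ∩ t, f i ≤ c :=
    calc ∑ i ∈ s ∩ t, f i ≤ #(s ∩ t) • c :=
          sum_le_card_nsmul _ _ _ fun i hi => hf i (mem_inter.mp hi).1
      _ ≤ 1 • c := by
          gcongr
          exact (card_le_card inter_subset_right).trans ht
      _ = c := one_smul ℕ c
  linarith [sum_inter_add_sum_sdiff s t f]

def argmaxAlloc : Fin 9 → Fin 3 := ![0, 2, 2, 2, 0, 0, 0, 0, 0]

lemma u4_le_u4_argmaxAlloc (i : Fin 3) (o : Fin 9) : u4 i o ≤ u4 (argmaxAlloc o) o := by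
  fin_cases i <;> fin_cases o <;> simp [u4, argmaxAlloc] <;> norm_num

lemma u4_nonneg (i : Fin 3) (o : Fin 9) : 0 ≤ u4 i o := by
  fin_cases i <;> fin_cases o <;> simp [u4] <;> norm_num

lemma u4_eq_of_ne_two {i : Fin 3} (hi : i ≠ 2) : u4 i = u4 0 := by
  fin_cases i <;> simp_all [u4]

lemma u4_lt_u4_two {i : Fin 3} (hi : i ≠ 2) {o : Fin 9}
    (ho : o ∈ ({1, 2, 3} : Finset (Fin 9))) :
    u4 i o < u4 2 o := by
  rw [u4_eq_of_ne_two hi]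
  fin_cases ho <;> simp [u4] <;> norm_num

lemma sum_u4_zero_one_two_three : ∑ o ∈ ({1, 2, 3} : Finset (Fin 9)), u4 0 o = 21 := by
  simp [sum_insert, u4]
  norm_num

lemma u4_apply_eq_of_welf4_maximal {p : Fin 9 → Fin 3} (hmax : ∀ q, welf4 q ≤ welf4 p)
    (o : Fin 9) : u4 (p o) o = u4 (argmaxAlloc o) o := by
  have hle : ∀ o ∈ univ, u4 (p o) o ≤ u4 (argmaxAlloc o) o :=
    fun o _ => u4_le_u4_argmaxAlloc (p o) o
  have heq : welf4 p = welf4 argmaxAlloc :=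
    le_antisymm (sum_le_sum hle) (hmax argmaxAlloc)
  exact (sum_eq_sum_iff_of_le hle).mp heq o (mem_univ o)

lemma subset_bundle4_two_of_welf4_maximal {p : Fin 9 → Fin 3}
    (hmax : ∀ q, welf4 q ≤ welf4 p) : ({1, 2, 3} : Finset (Fin 9)) ⊆ bundle4 p 2 := by
  intro o ho
  have hpo : u4 (p o) o = u4 2 o := by
    rw [u4_apply_eq_of_welf4_maximal hmax]
    fin_cases ho <;> rfl
  by_contra hne
  exact (u4_lt_u4_two (by simpa [bundle4] using hne) ho).ne hpo

lemma exists_bundle4_le_twelve {p : Fin 9 → Fin 3}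
    (h : ({1, 2, 3} : Finset (Fin 9)) ⊆ bundle4 p 2) :
    ∃ i ≠ 2, ∑ o ∈ bundle4 p i, u4 i o ≤ 12 := by
  have htotal : ∑ i : Fin 3, ∑ o ∈ bundle4 p i, u4 0 o = 45 := by
    unfold bundle4
    rw [sum_fiberwise univ p (u4 0)]
    simp [Fin.sum_univ_succ, u4]
    norm_num
  have hbundle2 : 21 ≤ ∑ o ∈ bundle4 p 2, u4 0 o :=
    sum_u4_zero_one_two_three ▸ sum_le_sum_of_subset_of_nonneg h fun o _ _ => u4_nonneg 0 o
  rw [Fin.sum_univ_three] at htotal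
  by_cases h0 : ∑ o ∈ bundle4 p 0, u4 0 o ≤ 12
  · exact ⟨0, by decide, h0⟩
  · refine ⟨1, by decide, ?_⟩
    rw [u4_eq_of_ne_two (by decide : (1 : Fin 3) ≠ 2)]
    linarith

lemma thirteen_le_sum_sdiff {i : Fin 3} (hi : i ≠ 2) {B O' : Finset (Fin 9)}
    (hB : ({1, 2, 3} : Finset (Fin 9)) ⊆ B) (hO' : #O' ≤ 1) :
    13 ≤ ∑ o ∈ B \ O', u4 i o := by
  rw [u4_eq_of_ne_two hi]
  have hle : ∀ o ∈ ({1, 2, 3} : Finset (Fin 9)), u4 0 o ≤ 8 := by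
    intro o ho
    fin_cases ho <;> norm_num [u4]
  calc (13 : ℝ) = ∑ o ∈ ({1, 2, 3} : Finset (Fin 9)), u4 0 o - 8 := by
        rw [sum_u4_zero_one_two_three]; norm_num
    _ ≤ ∑ o ∈ {1, 2, 3} \ O', u4 0 o :=
        sum_sub_le_sum_sdiff_of_card_le_one (by norm_num) hle hO'
    _ ≤ ∑ o ∈ B \ O', u4 0 o :=
        sum_le_sum_of_subset_of_nonneg (sdiff_subset_sdiff hB le_rfl) fun o _ _ => u4_nonneg 0 o

/-- In this instance no utilitarian-maximal allocation is EF1. -/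
theorem stmt4 :
    ∀ p : Fin 9 → Fin 3, (∀ q : Fin 9 → Fin 3, welf4 q ≤ welf4 p) → ¬ EF1_4 p := by
  intro p hmax hEF
  have hsub := subset_bundle4_two_of_welf4_maximal hmax
  obtain ⟨i, hi, hpoor⟩ := exists_bundle4_le_twelve hsub
  obtain ⟨O', -, hcard, hEF1⟩ := hEF i 2
  linarith [thirteen_le_sum_sdiff hi hsub hcard]
end

section
/- If the allocation maximizing utilitarian welfare under decreased capacity constraints (obtained by subtracting a partial allocation p from the original capacities) combined with p achieves total welfare equal to the global maximum utilitarian welfare w*, then p extends to a utilitarian-maximal feasible allocation; conversely if the combined welfare is strictly less than w*, no such extension exists. -/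
open Finset

variable {A O : Type*}

/-- Feasibility of an allocation with lower/upper agent capacities `la, ua` and lower/upper
item capacities `lo, uo`. -/
def Feasible15 [Fintype A] [DecidableEq A] [DecidableEq O]
    (la ua : A → ℕ) (lo uo : O → ℕ) (r : A → Finset O) : Prop :=
  (∀ i : A, la i ≤ (r i).card ∧ (r i).card ≤ ua i) ∧
  (∀ o : O, lo o ≤ (Finset.univ.filter fun i => o ∈ r i).card ∧
    (Finset.univ.filter fun i => o ∈ r i).card ≤ uo o)

/-- Utilitarian welfare of an allocation. -/
noncomputable def welf15 [Fintype A] (u : A → O → ℝ) (r : A → Finset O) : ℝ :=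
  ∑ i, ∑ o ∈ r i, u i o

/-- UM-Completion reduces to one computation of a utilitarian-maximal allocation: if `q` is
a welfare-maximal completion of the partial allocation `p` under the decreased capacities,
then `p` extends to a utilitarian-maximal feasible allocation iff the combined welfare
reaches the global maximum welfare `wstar`. -/
theorem stmt15 [Fintype A] [Fintype O] [DecidableEq A] [DecidableEq O]
    (u : A → O → ℝ) (la ua : A → ℕ) (lo uo : O → ℕ)
    (p : A → Finset O)
    (hpUpper : (∀ i : A, (p i).card ≤ ua i) ∧
      ∀ o : O, (Finset.univ.filter fun i => o ∈ p i).card ≤ uo o)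
    (q : A → Finset O)
    (hdisj : ∀ i : A, Disjoint (p i) (q i))
    (hqFeas : Feasible15 la ua lo uo (fun i => p i ∪ q i))
    (hqMax : ∀ q' : A → Finset O, (∀ i : A, Disjoint (p i) (q' i)) →
      Feasible15 la ua lo uo (fun i => p i ∪ q' i) →
      welf15 u q' ≤ welf15 u q)
    (wstar : ℝ)
    (hub : ∀ s : A → Finset O, Feasible15 la ua lo uo s → welf15 u s ≤ wstar)
    (hex : ∃ s : A → Finset O, Feasible15 la ua lo uo s ∧ welf15 u s = wstar) :
    (wstar ≤ welf15 u (fun i => p i ∪ q i) →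
      (Feasible15 la ua lo uo (fun i => p i ∪ q i) ∧
        (∀ s : A → Finset O, Feasible15 la ua lo uo s →
          welf15 u s ≤ welf15 u (fun i => p i ∪ q i)) ∧
        ∀ i : A, p i ⊆ p i ∪ q i)) ∧
    (welf15 u (fun i => p i ∪ q i) < wstar →
      ¬ ∃ r : A → Finset O, Feasible15 la ua lo uo r ∧
          (∀ s : A → Finset O, Feasible15 la ua lo uo s → welf15 u s ≤ welf15 u r) ∧
          ∀ i : A, p i ⊆ r i) := by

  have hsplit : ∀ r' : A → Finset O, (∀ i, Disjoint (p i) (r' i)) →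
      welf15 u (fun i => p i ∪ r' i) = welf15 u p + welf15 u r' := by
    intro r' hd
    simp only [welf15]
    rw [← Finset.sum_add_distrib]
    exact Finset.sum_congr rfl fun i _ => Finset.sum_union (hd i)
  constructor
  · intro hle
    refine ⟨hqFeas, fun s hs => le_trans (hub s hs) hle, fun i => Finset.subset_union_left⟩
  · rintro hlt ⟨r, hrFeas, hrMax, hrSub⟩
    obtain ⟨s, hsF, hsW⟩ := hex
    have hrw : wstar ≤ welf15 u r := hsW ▸ hrMax s hsF
    set q' : A → Finset O := fun i => r i \ p i with hq'
    have hd' : ∀ i, Disjoint (p i) (q' i) := fun i => Finset.disjoint_sdiff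
    have hun : (fun i => p i ∪ q' i) = r := by
      funext i; exact Finset.union_sdiff_of_subset (hrSub i)
    have hF' : Feasible15 la ua lo uo (fun i => p i ∪ q' i) := hun ▸ hrFeas
    have h1 := hqMax q' hd' hF'
    have h2 : welf15 u r ≤ welf15 u (fun i => p i ∪ q i) := by
      rw [← hun, hsplit q' hd', hsplit q hdisj]
      linarith
    linarith
end

section
/- For any allocation p and agents i, j with |p(i)| ≥ |p(j)| − 1, the following are equivalent: (1) for every additive utility function u_i consistent with i's ordinal preference ≿_i, u_i(p(i)) ≥ u_i(p(j) \ {o}) for a fixed item o ∈ p(j); (2) there is an injection f from p(j) \ {o} into p(i) such that f(x) ≿_i x for all x ∈ p(j) \ {o}. -/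
open Finset

/-- Equivalence of the two formulations of NEF1 domination: for bundles `pi, pj` with
`|pi| ≥ |pj| - 1` and an item `o ∈ pj`, agent `i` weakly prefers `pi` to `pj \ {o}` under
every nonnegative additive utility consistent with their weak order `pref` iff there is an
injection `f` from `pj \ {o}` into `pi` with `f x ≿ᵢ x` for all `x`. -/
theorem stmt17 {O : Type*} [Fintype O] [DecidableEq O]
    (pref : O → O → Prop)
    (htotal : ∀ x y : O, pref x y ∨ pref y x)
    (htrans : Transitive pref)
    (pi pj : Finset O) (o : O) (ho : o ∈ pj)
    (hcard : pj.card - 1 ≤ pi.card) :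
    ((∀ u : O → ℝ, (∀ x y : O, pref x y ↔ u y ≤ u x) → (∀ x : O, 0 ≤ u x) →
        ∑ x ∈ pj.erase o, u x ≤ ∑ x ∈ pi, u x) ↔
      ∃ f : O → O, Set.InjOn f ((pj.erase o : Finset O) : Set O) ∧
        ∀ x ∈ pj.erase o, f x ∈ pi ∧ pref (f x) x) := by
  classical
  haveI : Nonempty O := ⟨o⟩
  have hrefl : ∀ x, pref x x := fun x => (htotal x x).elim id id
  constructor
  · intro H
    -- rank utility
    set r : O → ℕ := fun x => (univ.filter (fun y => pref x y)).card with hr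
    have hrcons : ∀ x y, pref x y ↔ r y ≤ r x := by
      intro x y
      constructor
      · intro h
        apply Finset.card_le_card
        intro z hz
        simp only [r, mem_filter, mem_univ, true_and] at hz ⊢
        exact htrans h hz
      · intro h
        by_contra hxy
        have hyx := (htotal x y).resolve_left hxy
        have hlt : r x < r y := by
          apply Finset.card_lt_card
          constructor
          · intro z hz
            simp only [r, mem_filter, mem_univ, true_and] at hz ⊢
            exact htrans hyx hz
          · intro hsub
            have hy : y ∈ univ.filter fun z => pref x z :=
              hsub (by simp [r, hrefl y])
            simp only [mem_filter] at hy
            exact hxy hy.2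
        omega
    set n := Fintype.card O with hn
    have hrle : ∀ x, r x ≤ n := fun x => by
      simpa [hn] using Finset.card_filter_le univ (fun y => pref x y)
    -- counting lemma
    have hcount : ∀ t : O,
        ((pj.erase o).filter (fun x => pref x t)).card ≤
          (pi.filter (fun x => pref x t)).card := by
      intro t
      set M : ℝ := (n : ℝ) * n + 1 with hM
      have hMn : (n : ℝ) < M := by
        have hn1 : (1 : ℝ) ≤ n := by
          exact_mod_cast Nat.one_le_iff_ne_zero.2 (Fintype.card_ne_zero (α := O))
        nlinarith
      have hMpos : (0 : ℝ) < M := lt_of_le_of_lt (Nat.cast_nonneg n) hMn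
      set u : O → ℝ := fun x => (r x : ℝ) + (if pref x t then M else 0) with hu
      have hcons : ∀ x y, pref x y ↔ u y ≤ u x := by
        intro x y
        by_cases hx : pref x t <;> by_cases hy : pref y t
        · simp only [u, hx, hy, if_pos]
          rw [hrcons]
          constructor <;> intro h
          · have : (r y : ℝ) ≤ r x := by exact_mod_cast h
            linarith
          · have : (r y : ℝ) ≤ r x := by linarith
            exact_mod_cast this
        · have hxy : pref x y := htrans hx ((htotal y t).resolve_left hy)
          have : u y ≤ u x := by
            simp only [u, hx, hy, if_pos, if_neg, not_false_iff]
            have h1 : (r y : ℝ) ≤ n := by exact_mod_cast hrle y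
            have h2 : (0 : ℝ) ≤ r x := Nat.cast_nonneg _
            linarith
          simp [hxy, this]
        · have hnxy : ¬ pref x y := fun h => hx (htrans h hy)
          have : ¬ (u y ≤ u x) := by
            simp only [u, hx, hy, if_pos, if_neg, not_false_iff]
            have h1 : (r x : ℝ) ≤ n := by exact_mod_cast hrle x
            have h2 : (0 : ℝ) ≤ r y := Nat.cast_nonneg _
            push_neg
            linarith
          simp [hnxy, this]
        · simp only [u, hx, hy, if_neg, not_false_iff, add_zero]
          rw [hrcons]
          exact ⟨fun h => by exact_mod_cast h, fun h => by exact_mod_cast h⟩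
      have hnonneg : ∀ x, 0 ≤ u x := by
        intro x
        have : (0 : ℝ) ≤ r x := Nat.cast_nonneg _
        by_cases hx : pref x t <;> simp [u, hx] <;> linarith
      have hsum := H u hcons hnonneg
      -- split the sums
      have hsplit : ∀ A : Finset O, ∑ x ∈ A, u x =
          (∑ x ∈ A, (r x : ℝ)) + ((A.filter (fun x => pref x t)).card : ℝ) * M := by
        intro A
        simp only [u, Finset.sum_add_distrib]
        congr 1
        rw [← Finset.sum_filter, Finset.sum_const, nsmul_eq_mul]
      rw [hsplit, hsplit] at hsum
      set cj := ((pj.erase o).filter (fun x => pref x t)).card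
      set ci := (pi.filter (fun x => pref x t)).card
      have hSj : (0 : ℝ) ≤ ∑ x ∈ pj.erase o, (r x : ℝ) :=
        Finset.sum_nonneg fun x _ => Nat.cast_nonneg _
      have hSi : (∑ x ∈ pi, (r x : ℝ)) ≤ (n : ℝ) * n := by
        calc (∑ x ∈ pi, (r x : ℝ)) ≤ ∑ _x ∈ pi, (n : ℝ) :=
              Finset.sum_le_sum fun x _ => by exact_mod_cast hrle x
          _ = (pi.card : ℝ) * n := by rw [Finset.sum_const, nsmul_eq_mul]
          _ ≤ (n : ℝ) * n := by
              have : pi.card ≤ n := Finset.card_le_univ pi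
              have := (Nat.cast_le (α := ℝ)).2 this
              nlinarith [Nat.cast_nonneg (α := ℝ) n]
      have hlt : (cj : ℝ) * M < ((ci : ℝ) + 1) * M := by nlinarith
      have : (cj : ℝ) < (ci : ℝ) + 1 := lt_of_mul_lt_mul_right hlt (le_of_lt hMpos)
      have : cj < ci + 1 := by exact_mod_cast this
      omega
    -- Hall's theorem
    set nbr : {x // x ∈ pj.erase o} → Finset O :=
      fun x => pi.filter (fun y => pref y x.1) with hnbr
    have hhall : ∀ s : Finset {x // x ∈ pj.erase o}, s.card ≤ (s.biUnion nbr).card := by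
      intro s
      rcases s.eq_empty_or_nonempty with rfl | hs
      · simp
      obtain ⟨t, hts, htmin⟩ := Finset.exists_min_image s (fun x => r x.1) hs
      have h1 : s.card ≤ ((pj.erase o).filter (fun x => pref x t.1)).card := by
        have himg : s.image Subtype.val ⊆ (pj.erase o).filter (fun x => pref x t.1) := by
          intro x hx
          simp only [Finset.mem_image] at hx
          obtain ⟨y, hy, rfl⟩ := hx
          refine Finset.mem_filter.2 ⟨y.2, ?_⟩
          exact (hrcons y.1 t.1).2 (htmin y hy)
        calc s.card = (s.image Subtype.val).card :=
              (Finset.card_image_of_injective s Subtype.val_injective).symm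
          _ ≤ _ := Finset.card_le_card himg
      have h2 : (pi.filter (fun x => pref x t.1)) ⊆ s.biUnion nbr := by
        intro y hy
        exact Finset.mem_biUnion.2 ⟨t, hts, hy⟩
      exact le_trans h1 (le_trans (hcount t.1) (Finset.card_le_card h2))
    obtain ⟨f₀, hf₀inj, hf₀⟩ :=
      (Finset.all_card_le_biUnion_card_iff_exists_injective nbr).1 hhall
    refine ⟨fun x => if h : x ∈ pj.erase o then f₀ ⟨x, h⟩ else x, ?_, ?_⟩
    · intro x hx y hy hxy
      simp only [Finset.coe_mem, Finset.mem_coe] at hx hy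
      simp only [dif_pos hx, dif_pos hy] at hxy
      have := hf₀inj hxy
      exact congrArg Subtype.val this
    · intro x hx
      simp only [dif_pos hx]
      have := hf₀ ⟨x, hx⟩
      simp only [hnbr, Finset.mem_filter] at this
      exact this
  · rintro ⟨f, hinj, hf⟩ u hcons hnonneg
    calc ∑ x ∈ pj.erase o, u x ≤ ∑ x ∈ pj.erase o, u (f x) :=
          Finset.sum_le_sum fun x hx => (hcons (f x) x).1 (hf x hx).2
      _ = ∑ y ∈ (pj.erase o).image f, u y := (Finset.sum_image fun x hx y hy h =>
            hinj (Finset.mem_coe.2 hx) (Finset.mem_coe.2 hy) h).symm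
      _ ≤ ∑ y ∈ pi, u y := by
          apply Finset.sum_le_sum_of_subset_of_nonneg
          · intro y hy
            obtain ⟨x, hx, rfl⟩ := Finset.mem_image.1 hy
            exact (hf x hx).1
          · exact fun y _ _ => hnonneg y
end

section
/- Rank-maximality can be expressed as utilitarian-maximality under lexicographic utilities: if each agent i receives utility (x·m)^{m−j} for each item from their j-th equivalence class, where x is the maximum item capacity and m the number of items, then an allocation maximizes the sum of these utilities if and only if its rank vector is lexicographically maximal among feasible allocations. -/
/-!
With `B = x·m`, the utility of an allocation is the number with base-`B` digits given by its
rank vector. A feasible allocation makes at most `B` assignments, so the digits after any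
position sum to at most `B`, and a lexicographically larger rank vector never has a smaller
utility. The converse can only fail through a carry: if `p` maximizes utility but `q` beats
`p` at the first differing rank `j`, the comparison forces all of `p`'s assignments to have
rank worse than `j` and to fill every item to capacity `x`. An item that `q` gives to an
agent who ranks it `j` is then held in `p` by someone ranking it worse, and moving it to
the first agent strictly raises the utility of `p`.
-/
open Finset

variable {A O : Type*}

/-- Feasibility: each item `o` is allocated to at most `cap o` agents. -/
def Feas18 [Fintype A] [DecidableEq A] [DecidableEq O] (cap : O → ℕ) (p : A → Finset O) : Prop :=
  ∀ o : O, (Finset.univ.filter fun a => o ∈ p a).card ≤ cap o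

/-- Lexicographic utilities: an item of rank `j` for agent `a` is worth `(x·m)^(m-j)`. -/
def lexU18 [Fintype A] [Fintype O] (rnk : A → O → ℕ) (x : ℕ) (p : A → Finset O) : ℕ :=
  ∑ a, ∑ o ∈ p a, (x * Fintype.card O) ^ (Fintype.card O - rnk a o)

/-- The rank vector of an allocation: `rvec p j` is the number of assignments of an item
to an agent for whom it has rank `j`. -/
def rvec18 [Fintype A] (rnk : A → O → ℕ) (p : A → Finset O) (j : ℕ) : ℕ :=
  ∑ a, ((p a).filter fun o => rnk a o = j).card

/-- `r` is lexicographically at least `r'`: either they agree everywhere, or at the first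
coordinate where they differ `r` is larger. -/
def lexGE18 (r r' : ℕ → ℕ) : Prop :=
  (∀ j, r j = r' j) ∨ ∃ j, (∀ k < j, r k = r' k) ∧ r' j < r j

def lexValue (B m : ℕ) (r : ℕ → ℕ) : ℕ :=
  ∑ k ∈ range (m + 1), r k * B ^ (m - k)

section LexValue

variable {B m j : ℕ} {r r' : ℕ → ℕ}

lemma sum_range_succ_eq_add_sum_Ioc {M : Type*} [AddCommMonoid M] (f : ℕ → M) (hj : j ≤ m) :
    ∑ k ∈ range (m + 1), f k = ∑ k ∈ range (j + 1), f k + ∑ k ∈ Ioc j m, f k := by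
  rw [← Ico_add_one_add_one_eq_Ioc, sum_range_add_sum_Ico f (by omega)]

lemma sum_Ioc_mul_pow_mul_le :
    (∑ k ∈ Ioc j m, r k * B ^ (m - k)) * B ≤ (∑ k ∈ Ioc j m, r k) * B ^ (m - j) := by
  rcases B.eq_zero_or_pos with rfl | hB
  · simp
  rw [sum_mul, sum_mul]
  refine sum_le_sum fun k hk => ?_
  obtain ⟨hjk, hkm⟩ := mem_Ioc.1 hk
  rw [mul_assoc, ← pow_succ]
  exact Nat.mul_le_mul_left _ (Nat.pow_le_pow_right hB (by omega))

lemma sum_Ioc_mul_pow_lt (h : ∑ k ∈ Ioc j m, r k < B) :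
    ∑ k ∈ Ioc j m, r k * B ^ (m - k) < B ^ (m - j) := by
  have hpow : 0 < B ^ (m - j) := pow_pos (by omega) _
  have := (sum_Ioc_mul_pow_mul_le (r := r)).trans_lt (Nat.mul_lt_mul_of_pos_right h hpow)
  rw [mul_comm B] at this
  exact Nat.lt_of_mul_lt_mul_right this

lemma sum_Ioc_mul_pow_le (h : ∑ k ∈ Ioc j m, r k ≤ B) :
    ∑ k ∈ Ioc j m, r k * B ^ (m - k) ≤ B ^ (m - j) := by
  rcases B.eq_zero_or_pos with rfl | hB
  · have hr : ∀ k ∈ Ioc j m, r k = 0 := sum_eq_zero_iff.1 (Nat.le_zero.1 h)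
    simp +contextual [hr]
  have := (sum_Ioc_mul_pow_mul_le (B := B) (m := m) (r := r)).trans (Nat.mul_le_mul_right _ h)
  rw [mul_comm B] at this
  exact Nat.le_of_mul_le_mul_right this hB

lemma lexValue_add_pow_le (hj : j ≤ m) (hhead : ∀ k < j, r k = r' k) (hlt : r' j < r j) :
    lexValue B m r' + B ^ (m - j) ≤ lexValue B m r + ∑ k ∈ Ioc j m, r' k * B ^ (m - k) := by
  unfold lexValue
  have hheads : ∑ k ∈ range j, r' k * B ^ (m - k) = ∑ k ∈ range j, r k * B ^ (m - k) :=
    sum_congr rfl fun k hk => by rw [hhead k (mem_range.1 hk)]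
  rw [sum_range_succ_eq_add_sum_Ioc _ hj, sum_range_succ_eq_add_sum_Ioc _ hj,
    sum_range_succ, sum_range_succ, hheads]
  have : (r' j + 1) * B ^ (m - j) ≤ r j * B ^ (m - j) := Nat.mul_le_mul_right _ hlt
  rw [add_one_mul] at this
  omega

lemma lexValue_le_of_lex_lt (hj : j ≤ m) (hhead : ∀ k < j, r k = r' k) (hlt : r' j < r j)
    (hr' : ∑ k ∈ Ioc j m, r' k ≤ B) : lexValue B m r' ≤ lexValue B m r := by
  have := lexValue_add_pow_le (B := B) hj hhead hlt
  have := sum_Ioc_mul_pow_le (m := m) hr'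
  omega

lemma le_sum_Ioc_of_lexValue_le (hj : j ≤ m) (hhead : ∀ k < j, r k = r' k) (hlt : r j < r' j)
    (hle : lexValue B m r' ≤ lexValue B m r) : B ≤ ∑ k ∈ Ioc j m, r k := by
  by_contra! h
  have := lexValue_add_pow_le (B := B) hj (fun k hk => (hhead k hk).symm) hlt
  have := sum_Ioc_mul_pow_lt (m := m) h
  omega

end LexValue

lemma lexGE18_or_exists_lt (r r' : ℕ → ℕ) :
    lexGE18 r r' ∨ ∃ j, (∀ k < j, r k = r' k) ∧ r j < r' j := by
  by_cases h : ∀ j, r j = r' j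
  · exact Or.inl (Or.inl h)
  push Not at h
  classical
  have hhead : ∀ k < Nat.find h, r k = r' k := fun k hk => not_not.1 (Nat.find_min h hk)
  rcases (Nat.find_spec h).lt_or_gt with hlt | hgt
  · exact Or.inr ⟨_, hhead, hlt⟩
  · exact Or.inl (Or.inr ⟨_, hhead, hgt⟩)

section RankVector

variable [Fintype A] {rnk : A → O → ℕ} {p : A → Finset O}

lemma sum_sum_eq_sum_rvec18_smul {M : Type*} [AddCommMonoid M] {s : Finset ℕ}
    (hs : ∀ a o, rnk a o ∈ s) (f : ℕ → M) :
    ∑ a, ∑ o ∈ p a, f (rnk a o) = ∑ j ∈ s, rvec18 rnk p j • f j := by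
  simp only [rvec18, sum_smul]
  rw [sum_comm]
  refine sum_congr rfl fun a _ => ?_
  rw [← sum_fiberwise_of_maps_to (fun o _ => hs a o)]
  refine sum_congr rfl fun j _ => ?_
  rw [sum_congr rfl fun o ho => by rw [(mem_filter.1 ho).2], sum_const]

lemma sum_rvec18 {m : ℕ} (hrnk : ∀ a o, rnk a o ≤ m) :
    ∑ j ∈ range (m + 1), rvec18 rnk p j = ∑ a, #(p a) := by
  have := sum_sum_eq_sum_rvec18_smul (p := p)
    (fun a o => mem_range.2 (Nat.lt_succ_of_le (hrnk a o))) fun _ => 1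
  simp only [smul_eq_mul, mul_one, ← card_eq_sum_ones] at this
  exact this.symm

lemma lexU18_eq_lexValue [Fintype O] (hrnk : ∀ a o, rnk a o ≤ Fintype.card O) (x : ℕ) :
    lexU18 rnk x p = lexValue (x * Fintype.card O) (Fintype.card O) (rvec18 rnk p) :=
  sum_sum_eq_sum_rvec18_smul (f := fun k => (x * Fintype.card O) ^ (Fintype.card O - k))
    fun a o => mem_range.2 (Nat.lt_succ_of_le (hrnk a o))

lemma rvec18_pos {a : A} {o : O} (h : o ∈ p a) : 0 < rvec18 rnk p (rnk a o) := by
  have : 0 < #{o' ∈ p a | rnk a o' = rnk a o} := card_pos.2 ⟨o, mem_filter.2 ⟨h, rfl⟩⟩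
  exact this.trans_le (single_le_sum (f := fun c => #{o' ∈ p c | rnk c o' = rnk a o})
    (fun _ _ => Nat.zero_le _) (mem_univ a))

lemma exists_mem_of_rvec18_ne_zero {j : ℕ} (h : rvec18 rnk p j ≠ 0) :
    ∃ a, ∃ o ∈ p a, rnk a o = j := by
  obtain ⟨a, -, ha⟩ := exists_ne_zero_of_sum_ne_zero h
  obtain ⟨o, ho⟩ := card_ne_zero.1 ha
  exact ⟨a, o, (mem_filter.1 ho).1, (mem_filter.1 ho).2⟩

end RankVector

section Feasibility

variable [Fintype A] [DecidableEq O] {cap : O → ℕ} {p : A → Finset O}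

lemma sum_card_eq_sum_card_filter_mem [Fintype O] (p : A → Finset O) :
    ∑ a, #(p a) = ∑ o, #{a | o ∈ p a} := by
  simp only [card_filter]
  rw [sum_comm]
  simp

variable [DecidableEq A]

lemma Feas18.sum_card_le [Fintype O] {x : ℕ} (hp : Feas18 cap p) (hcap : ∀ o, cap o ≤ x) :
    ∑ a, #(p a) ≤ x * Fintype.card O := by
  rw [sum_card_eq_sum_card_filter_mem, mul_comm, ← smul_eq_mul, ← card_univ, ← sum_const]
  exact sum_le_sum fun o _ => (hp o).trans (hcap o)

lemma Feas18.exists_mem_of_sum_card_eq [Fintype O] {x : ℕ} (hp : Feas18 cap p)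
    (hcap : ∀ o, cap o ≤ x) (hx : 1 ≤ x) (htot : ∑ a, #(p a) = x * Fintype.card O) (o : O) :
    ∃ b, o ∈ p b := by
  have hle : ∀ o ∈ univ, #{a | o ∈ p a} ≤ x := fun o _ => (hp o).trans (hcap o)
  rw [sum_card_eq_sum_card_filter_mem, mul_comm, ← smul_eq_mul, ← card_univ, ← sum_const] at htot
  have hfull : #{a | o ∈ p a} = x := (sum_eq_sum_iff_of_le hle).1 htot o (mem_univ o)
  obtain ⟨b, hb⟩ := card_pos.1 (hfull ▸ hx)
  exact ⟨b, (mem_filter.1 hb).2⟩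

def moveItem (p : A → Finset O) (o : O) (b a : A) : A → Finset O :=
  Function.update (Function.update p b ((p b).erase o)) a (insert o (p a))

variable {o : O} {a b : A}

lemma card_filter_mem_moveItem (hb : o ∈ p b) (ha : o ∉ p a) (o' : O) :
    #{c | o' ∈ moveItem p o b a c} = #{c | o' ∈ p c} := by
  have hab : a ≠ b := fun h => ha (h ▸ hb)
  by_cases ho : o' = o
  · subst ho
    have : univ.filter (fun c => o' ∈ moveItem p o' b a c)
        = insert a ((univ.filter fun c => o' ∈ p c).erase b) := by
      ext c
      simp only [mem_filter, mem_univ, true_and, mem_insert, mem_erase, moveItem,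
        Function.update_apply]
      by_cases hca : c = a <;> by_cases hcb : c = b <;> simp_all
    rw [this, card_insert_of_notMem (by simp [ha]), card_erase_of_mem (by simp [hb]),
      Nat.sub_add_cancel (card_pos.2 ⟨b, by simp [hb]⟩)]
  · refine congrArg card (filter_congr fun c _ => ?_)
    by_cases hca : c = a <;> by_cases hcb : c = b <;> simp_all [moveItem]

lemma Feas18.moveItem (hp : Feas18 cap p) (hb : o ∈ p b) (ha : o ∉ p a) :
    Feas18 cap (moveItem p o b a) := fun o' =>
  (card_filter_mem_moveItem hb ha o').trans_le (hp o')

lemma sum_sum_moveItem_add {M : Type*} [AddCommMonoid M] (w : A → O → M)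
    (hb : o ∈ p b) (ha : o ∉ p a) :
    ∑ c, ∑ o' ∈ moveItem p o b a c, w c o' + w b o = ∑ c, ∑ o' ∈ p c, w c o' + w a o := by
  have hab : a ≠ b := fun h => ha (h ▸ hb)
  have hagent : ∀ c, ∑ o' ∈ moveItem p o b a c, w c o' + (if c = b then w b o else 0)
      = ∑ o' ∈ p c, w c o' + (if c = a then w a o else 0) := by
    intro c
    by_cases hca : c = a
    · subst hca
      simp [moveItem, hab, sum_insert ha, add_comm]
    by_cases hcb : c = b
    · subst hcb
      simp [moveItem, hca, sum_erase_add _ _ hb]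
    simp [moveItem, hca, hcb]
  have := congrArg (fun f : A → M => ∑ c, f c) (funext hagent)
  simpa [sum_add_distrib] using this

end Feasibility

section Optimality

variable [Fintype A] [Fintype O] [DecidableEq A] [DecidableEq O] {rnk : A → O → ℕ}
  {cap : O → ℕ} {x : ℕ} {p q : A → Finset O}

lemma Feas18.sum_rvec18_le (hrnk : ∀ a o, rnk a o ≤ Fintype.card O) (hcap : ∀ o, cap o ≤ x)
    (hp : Feas18 cap p) :
    ∑ k ∈ range (Fintype.card O + 1), rvec18 rnk p k ≤ x * Fintype.card O :=
  (sum_rvec18 hrnk).trans_le (hp.sum_card_le hcap)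

lemma lexU18_le_of_lexGE18 (hrnk : ∀ a o, rnk a o ≤ Fintype.card O) (hcap : ∀ o, cap o ≤ x)
    (hq : Feas18 cap q) (h : lexGE18 (rvec18 rnk p) (rvec18 rnk q)) :
    lexU18 rnk x q ≤ lexU18 rnk x p := by
  rw [lexU18_eq_lexValue hrnk, lexU18_eq_lexValue hrnk]
  rcases h with heq | ⟨j, hhead, hlt⟩
  · rw [funext heq]
  obtain ⟨a, o, -, rfl⟩ := exists_mem_of_rvec18_ne_zero (p := p) (by omega : rvec18 rnk p j ≠ 0)
  refine lexValue_le_of_lex_lt (hrnk a o) hhead hlt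
    ((sum_le_sum_of_subset fun k hk => ?_).trans (hq.sum_rvec18_le hrnk hcap))
  rw [mem_range]
  exact Nat.lt_succ_of_le (mem_Ioc.1 hk).2

lemma rnk_le_of_forall_lexU18_le (hrnk : ∀ a o, 1 ≤ rnk a o ∧ rnk a o ≤ Fintype.card O)
    (hx : 1 ≤ x) (hp : Feas18 cap p)
    (hmax : ∀ q, Feas18 cap q → lexU18 rnk x q ≤ lexU18 rnk x p)
    {o : O} {a b : A} (hb : o ∈ p b) (ha : o ∉ p a) : rnk b o ≤ rnk a o := by
  by_contra! hlt
  have hrb := (hrnk b o).2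
  have hra := (hrnk a o).1
  have hgain : (x * Fintype.card O) ^ (Fintype.card O - rnk b o)
      < (x * Fintype.card O) ^ (Fintype.card O - rnk a o) :=
    Nat.pow_lt_pow_right (by nlinarith) (by omega)
  have hmove :=
    sum_sum_moveItem_add (fun c o' => (x * Fintype.card O) ^ (Fintype.card O - rnk c o')) hb ha
  have := hmax _ (hp.moveItem hb ha)
  unfold lexU18 at this
  omega

lemma lexGE18_of_forall_lexU18_le (hrnk : ∀ a o, 1 ≤ rnk a o ∧ rnk a o ≤ Fintype.card O)
    (hx : 1 ≤ x) (hcap : ∀ o, cap o ≤ x) (hp : Feas18 cap p)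
    (hmax : ∀ q, Feas18 cap q → lexU18 rnk x q ≤ lexU18 rnk x p) (hq : Feas18 cap q) :
    lexGE18 (rvec18 rnk p) (rvec18 rnk q) := by
  rcases lexGE18_or_exists_lt (rvec18 rnk p) (rvec18 rnk q) with h | ⟨j, hhead, hlt⟩
  · exact h
  exfalso
  have hrnk' : ∀ a o, rnk a o ≤ Fintype.card O := fun a o => (hrnk a o).2
  obtain ⟨a, o, -, rfl⟩ := exists_mem_of_rvec18_ne_zero (p := q) (by omega : rvec18 rnk q j ≠ 0)
  have hj := hrnk' a o
  have hle := hmax q hq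
  rw [lexU18_eq_lexValue hrnk', lexU18_eq_lexValue hrnk'] at hle
  have hupper : x * Fintype.card O ≤ ∑ k ∈ Ioc (rnk a o) (Fintype.card O), rvec18 rnk p k :=
    le_sum_Ioc_of_lexValue_le hj hhead hlt hle
  have htot := hp.sum_rvec18_le hrnk' hcap
  rw [sum_range_succ_eq_add_sum_Ioc _ hj] at htot
  have hhigh : ∀ c, ∀ o' ∈ p c, rnk a o < rnk c o' := by
    intro c o' ho'
    by_contra! hlow
    have := rvec18_pos (rnk := rnk) ho'
    have : rvec18 rnk p (rnk c o') ≤ ∑ k ∈ range (rnk a o + 1), rvec18 rnk p k :=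
      single_le_sum (fun _ _ => Nat.zero_le _) (mem_range.2 (by omega))
    omega
  have hfull : ∑ c, #(p c) = x * Fintype.card O := by
    rw [← sum_rvec18 hrnk', sum_range_succ_eq_add_sum_Ioc _ hj]
    omega
  obtain ⟨b, hb⟩ := hp.exists_mem_of_sum_card_eq hcap hx hfull o
  have hab := rnk_le_of_forall_lexU18_le hrnk hx hp hmax hb fun h => (hhigh a o h).false
  have := hhigh b o hb
  omega

end Optimality

/-- Rank-maximality is utilitarian-maximality under the lexicographic utilities
`(x·m)^(m-j)` where `x` bounds the item capacities: a feasible allocation maximizes the sum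
of these utilities iff its rank vector is lexicographically maximal among feasible
allocations. -/
theorem stmt18 [Fintype A] [Fintype O] [DecidableEq A] [DecidableEq O]
    (rnk : A → O → ℕ)
    (hrnk : ∀ (a : A) (o : O), 1 ≤ rnk a o ∧ rnk a o ≤ Fintype.card O)
    (cap : O → ℕ) (x : ℕ) (hx : 1 ≤ x) (hcap : ∀ o : O, cap o ≤ x)
    (p : A → Finset O) (hp : Feas18 cap p) :
    (∀ q : A → Finset O, Feas18 cap q → lexU18 rnk x q ≤ lexU18 rnk x p) ↔
    (∀ q : A → Finset O, Feas18 cap q → lexGE18 (rvec18 rnk p) (rvec18 rnk q)) :=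
  ⟨fun hmax _ hq => lexGE18_of_forall_lexU18_le hrnk hx hcap hp hmax hq,
    fun hlex q hq => lexU18_le_of_lexGE18 (fun a o => (hrnk a o).2) hcap hq (hlex q hq)⟩
end
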